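/- Let h'(z) = R·e^{iφ} with R > 0 and ω(z) = e^{iβ} (modulus 1 limit direction), and suppose cos(φ + β/2) > 0. Then the argument of f'(z) := h'(z)·(1 + conj(ω(z))·conj(h'(z))/h'(z)) is congruent to −β/2 modulo π. -/

import Mathlib

/-!
Factor `e^{-iβ/2}` out of `f' = h' + conj (ω h')`: what remains is `w + conj w = 2 Re w` with
`w = h' e^{iβ/2} = R e^{i(φ + β/2)}`, a positive real number since `cos (φ + β/2) > 0`.
Hence `f'` is a positive multiple of `e^{-iβ/2}`, whose argument is `-β/2` modulo `2π`.
-/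

open Complex ComplexConjugate

theorem add_conj_exp_mul_I_mul (z : ℂ) (β : ℝ) :
    z + conj (exp (β * I) * z) = 2 * (z * exp ((β / 2 : ℝ) * I)).re * exp (-(β / 2 : ℝ) * I) := by
  set w := z * exp ((β / 2 : ℝ) * I)
  have hz : z = w * exp (-(β / 2 : ℝ) * I) := by
    rw [mul_assoc, ← exp_add, ← add_mul, add_neg_cancel, zero_mul, exp_zero, mul_one]
  have hconj : conj (exp (β * I) * z) = conj w * exp (-(β / 2 : ℝ) * I) := by
    rw [map_mul, map_mul, ← exp_conj, ← exp_conj, map_mul, map_mul, conj_ofReal, conj_ofReal,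
      conj_I, mul_assoc, ← exp_add, mul_comm]
    congr 2
    push_cast
    ring
  rw [hconj, hz, ← add_mul, add_conj]
  push_cast
  ring

theorem re_ofReal_mul_exp_mul_I_mul_exp_mul_I (R φ ψ : ℝ) :
    ((R : ℂ) * exp (φ * I) * exp (ψ * I)).re = R * Real.cos (φ + ψ) := by
  rw [mul_assoc, ← exp_add, ← add_mul, ← ofReal_add, re_ofReal_mul, exp_ofReal_mul_I_re]

theorem exists_arg_ofReal_mul_exp_mul_I {r : ℝ} (hr : 0 < r) (θ : ℝ) :
    ∃ k : ℤ, arg (r * exp (θ * I)) = θ + k * (2 * Real.pi) := by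
  refine ⟨⌊(Real.pi - θ) / (2 * Real.pi)⌋, ?_⟩
  rw [exp_mul_I, eq_add_of_sub_eq' (arg_mul_cos_add_sin_mul_I_sub hr θ)]
  ring

/-- If `h' = R e^{iφ}` with `R > 0`, `ω = e^{iβ}` and `cos (φ + β/2) > 0`, then the
argument of `f' = h' (1 + conj ω · conj h' / h')` is congruent to `-β/2` modulo `π`. -/
theorem arg_fprime_eq_neg_half_beta_mod_pi
    (R φ β : ℝ) (hR : 0 < R) (hcos : 0 < Real.cos (φ + β / 2))
    (h' ω f' : ℂ)
    (hh : h' = (R : ℂ) * Complex.exp ((φ : ℂ) * Complex.I))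
    (hω : ω = Complex.exp ((β : ℂ) * Complex.I))
    (hf : f' = h' * (1 + (starRingEnd ℂ) ω * (starRingEnd ℂ) h' / h')) :
    ∃ k : ℤ, Complex.arg f' = -β / 2 + k * Real.pi := by
  have hh'ne : h' ≠ 0 := hh ▸ mul_ne_zero (ofReal_ne_zero.mpr hR.ne') (exp_ne_zero _)
  have hf' : f' = (2 * R * Real.cos (φ + β / 2) : ℝ) * exp ((-β / 2 : ℝ) * I) := by
    rw [hf, mul_add, mul_one, mul_div_cancel₀ _ hh'ne, ← map_mul, hω, add_conj_exp_mul_I_mul, hh,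
      re_ofReal_mul_exp_mul_I_mul_exp_mul_I, neg_div]
    push_cast
    ring
  obtain ⟨k, hk⟩ := exists_arg_ofReal_mul_exp_mul_I (by positivity : 0 < 2 * R * Real.cos (φ + β / 2))
    (-β / 2)
  exact ⟨2 * k, by rw [hf', hk]; push_cast; ring⟩
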